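/- arXiv:math/0503407 — 5 statements merged into one kernel-verified Lean document; each statement's English description precedes it below -/
import Mathlib

section
/- Let G be a group with a left-invariant partial order < admitting a left-invariant simply connected extension (∼_u, ∼_l), and let H be a completely convex normal subgroup of G. Then for all g1, g2, g3 ∈ G: (1) if g1H <' g2H and g2H <' g3H, then g1H <' g3H; (2) if g1H ∼_u' g2H and g2H ∼_l' g3H, then g1H <' g3H; (3) if g1H ∼_u' g2H and g3H <' g2H, then g1H ∼_u' g3H; (4) if g1H ∼_l' g2H and g2H <' g3H, then g1H ∼_l' g3H. -/
open Pointwise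

namespace PaperSC

variable {S : Type*}

/-- Exactly one of four propositions holds. -/
def ExactlyOne4 (p q r s : Prop) : Prop :=
  (p ∨ q ∨ r ∨ s) ∧ (p → ¬q ∧ ¬r ∧ ¬s) ∧ (q → ¬r ∧ ¬s) ∧ (r → ¬s)

/-- `x` and `y` are incomparable with respect to the strict order `lt`. -/
def Incomp (lt : S → S → Prop) (x y : S) : Prop :=
  x ≠ y ∧ ¬ lt x y ∧ ¬ lt y x

/-- The reflexive closure of `lt`. -/
def Le' (lt : S → S → Prop) (x y : S) : Prop := x = y ∨ lt x y

/-- `x ∼ᵤ y` : `x` and `y` are incomparable and have a common upper bound. -/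
def SimU (lt : S → S → Prop) (x y : S) : Prop :=
  Incomp lt x y ∧ ∃ z, Le' lt x z ∧ Le' lt y z

/-- `x ∼ₗ y` : `x` and `y` are incomparable and have a common lower bound. -/
def SimL (lt : S → S → Prop) (x y : S) : Prop :=
  Incomp lt x y ∧ ∃ z, Le' lt z x ∧ Le' lt z y

/-- Every incomparable pair has a common upper bound or a common lower bound. -/
def StronglyConnectedRel (lt : S → S → Prop) : Prop :=
  ∀ x y, Incomp lt x y → SimU lt x y ∨ SimL lt x y

/-- Acyclicity: `x ∼ᵤ y` and `x ∼ₗ z` imply `y < z`. -/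
def AcyclicRel (lt : S → S → Prop) : Prop :=
  ∀ x y z, SimU lt x y → SimL lt x z → lt y z

/-- `(u, l)` is a simply connected extension of the strict partial order `lt`. -/
structure IsSCExt (lt u l : S → S → Prop) : Prop where
  u_symm : ∀ x y, u x y → u y x
  l_symm : ∀ x y, l x y → l y x
  exactly_one : ∀ x y, x ≠ y → ExactlyOne4 (lt x y) (lt y x) (u x y) (l x y)
  u_of_ub : ∀ x y, Incomp lt x y → (∃ z, Le' lt x z ∧ Le' lt y z) → u x y
  l_of_lb : ∀ x y, Incomp lt x y → (∃ z, Le' lt z x ∧ Le' lt z y) → l x y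
  acyclic : ∀ x y z, u x y → l x z → lt y z

/-- `b` is between `a` and `c` (with respect to `lt` and the extension `(u, l)`). -/
def Btwn (lt u l : S → S → Prop) (a c b : S) : Prop :=
  (lt a c ∧ ((lt a b ∧ lt b c) ∨ (u a b ∧ l b c))) ∨
  (lt c a ∧ ((lt c b ∧ lt b a) ∨ (u c b ∧ l b a))) ∨
  (l a c ∧ ((l a b ∧ lt b c) ∨ (l c b ∧ lt b a))) ∨
  (u a c ∧ ((u a b ∧ lt c b) ∨ (u c b ∧ lt a b)))

/-- The between set `B_{a,b}`; it equals `{a}` when `a = b`. -/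
def BSet (lt u l : S → S → Prop) (a b : S) : Set S :=
  {a, b} ∪ {x | a ≠ b ∧ Btwn lt u l a b x}

/-- The set `A` is totally ordered by `lt`. -/
def IsChainRel (lt : S → S → Prop) (A : Set S) : Prop :=
  ∀ p ∈ A, ∀ q ∈ A, p = q ∨ lt p q ∨ lt q p

/-- `x O y` iff `B_{x,y}` is totally ordered by `lt`. -/
def ORel (lt u l : S → S → Prop) (x y : S) : Prop :=
  IsChainRel lt (BSet lt u l x y)

/-- The extension is rectifiable: every between set is a finite union of `O`-classes. -/
def Rectifiable (lt u l : S → S → Prop) : Prop :=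
  ∀ a b : S, a ≠ b → ∃ F : Finset S,
    (↑F : Set S) ⊆ BSet lt u l a b ∧
    ∀ x ∈ BSet lt u l a b, ∃ c ∈ F, ORel lt u l x c

/-- A relation on a group is left-invariant. -/
def LeftInvariant {G : Type*} [Group G] (r : G → G → Prop) : Prop :=
  ∀ f g h : G, r g h → r (f * g) (f * h)

/-- A subgroup `H` is completely convex: between sets of elements of `H` lie in `H`. -/
def CompletelyConvex {G : Type*} [Group G] (lt u l : G → G → Prop) (H : Subgroup G) : Prop :=
  ∀ h1 ∈ H, ∀ h2 ∈ H, BSet lt u l h1 h2 ⊆ (H : Set G)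

/-- The relation induced on the quotient `G ⧸ H` by a relation `r` on `G`:
`g₁H r' g₂H` iff the cosets are distinct and `r g₁ (g₂ h)` for some `h ∈ H`. -/
def QRel {G : Type*} [Group G] (r : G → G → Prop) (H : Subgroup G) (x y : G ⧸ H) : Prop :=
  x ≠ y ∧ ∃ g1 g2 : G, (g1 : G ⧸ H) = x ∧ (g2 : G ⧸ H) = y ∧ ∃ h ∈ H, r g1 (g2 * h)

/-! Properties (1)–(4) hold in `G` itself: (1) is transitivity, (2) is acyclicity, and (3), (4)
follow from acyclicity and the common-bound axioms. By left invariance and normality, a relation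
between two cosets can be witnessed from any representative of either coset, so the hypotheses
can be realised as `g₁ R b` and `b R' c` (or `c < b`) with a common middle element `b ∈ g₂H`.
It remains to see that `g₁H ≠ g₃H`: otherwise `b`, lying between `g₁` and `c`, would lie in the
same coset by complete convexity, contradicting `g₁H ≠ g₂H`. -/

section Extension

variable {lt u l : S → S → Prop}

theorem IsSCExt.incomp_of_u (hsce : IsSCExt lt u l) {a b : S} (hab : a ≠ b) (hu : u a b) :
    Incomp lt a b ∧ ¬ l a b := by
  obtain ⟨-, hlt, hgt, hul⟩ := hsce.exactly_one a b hab
  exact ⟨⟨hab, fun h => (hlt h).2.1 hu, fun h => (hgt h).1 hu⟩, hul hu⟩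

theorem IsSCExt.incomp_of_l (hsce : IsSCExt lt u l) {a b : S} (hab : a ≠ b) (hl : l a b) :
    Incomp lt a b ∧ ¬ u a b := by
  obtain ⟨-, hlt, hgt, hul⟩ := hsce.exactly_one a b hab
  exact ⟨⟨hab, fun h => (hlt h).2.2 hl, fun h => (hgt h).2 hl⟩, fun h => hul h hl⟩

theorem IsSCExt.lt_of_u_of_l (hsce : IsSCExt lt u l) {a b c : S} (hab : u a b) (hbc : l b c) :
    lt a c :=
  hsce.acyclic b a c (hsce.u_symm a b hab) hbc

theorem IsSCExt.u_of_u_of_lt (hsce : IsSCExt lt u l) (hirr : ∀ x, ¬ lt x x)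
    (htrans : ∀ x y z, lt x y → lt y z → lt x z) {a b c : S} (hab : a ≠ b) (hu : u a b)
    (hcb : lt c b) : Incomp lt a c ∧ u a c := by
  obtain ⟨⟨-, hnab, hnba⟩, hnl⟩ := hsce.incomp_of_u hab hu
  have hinc : Incomp lt a c :=
    ⟨fun e => hnab (e ▸ hcb), fun h => hnab (htrans a c b h hcb),
      fun h => hnl (hsce.l_of_lb a b ⟨hab, hnab, hnba⟩ ⟨c, Or.inr h, Or.inr hcb⟩)⟩
  refine ⟨hinc, ?_⟩
  rcases (hsce.exactly_one a c hinc.1).1 with h | h | h | h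
  · exact absurd h hinc.2.1
  · exact absurd h hinc.2.2
  · exact h
  · exact absurd (htrans b c b (hsce.acyclic a b c hu h) hcb) (hirr b)

theorem IsSCExt.l_of_l_of_lt (hsce : IsSCExt lt u l) (hirr : ∀ x, ¬ lt x x)
    (htrans : ∀ x y z, lt x y → lt y z → lt x z) {a b c : S} (hab : a ≠ b) (hl : l a b)
    (hbc : lt b c) : Incomp lt a c ∧ l a c := by
  obtain ⟨⟨-, hnab, hnba⟩, hnu⟩ := hsce.incomp_of_l hab hl
  have hinc : Incomp lt a c :=
    ⟨fun e => hnba (e ▸ hbc),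
      fun h => hnu (hsce.u_of_ub a b ⟨hab, hnab, hnba⟩ ⟨c, Or.inr h, Or.inr hbc⟩),
      fun h => hnba (htrans b c a hbc h)⟩
  refine ⟨hinc, ?_⟩
  rcases (hsce.exactly_one a c hinc.1).1 with h | h | h | h
  · exact absurd h hinc.2.1
  · exact absurd h hinc.2.2
  · exact absurd (htrans b c b hbc (hsce.acyclic a c b h hl)) (hirr b)
  · exact h

end Extension

section Quotient

variable {G : Type*} [Group G] {lt u l r : G → G → Prop} {H : Subgroup G}

theorem Btwn.mul_left (hltinv : LeftInvariant lt) (huinv : LeftInvariant u)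
    (hlinv : LeftInvariant l) (f : G) {a c b : G} (hb : Btwn lt u l a c b) :
    Btwn lt u l (f * a) (f * c) (f * b) := by
  have := hltinv f; have := huinv f; have := hlinv f
  unfold Btwn at hb ⊢
  aesop

theorem mk_eq_of_btwn (hltinv : LeftInvariant lt) (huinv : LeftInvariant u)
    (hlinv : LeftInvariant l) (hcc : CompletelyConvex lt u l H) {a b c : G} (hac : a ≠ c)
    (hmk : (a : G ⧸ H) = c) (hb : Btwn lt u l a c b) : (b : G ⧸ H) = a := by
  have hb' := hb.mul_left hltinv huinv hlinv a⁻¹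
  rw [inv_mul_cancel] at hb'
  have hne : (1 : G) ≠ a⁻¹ * c := fun e => hac (by rw [← mul_inv_cancel_left a c, ← e, mul_one])
  exact (QuotientGroup.eq.mpr
    (hcc 1 H.one_mem _ (QuotientGroup.eq.mp hmk) (Set.mem_union_right _ ⟨hne, hb'⟩))).symm

theorem qrel_mk_of_btwn (hltinv : LeftInvariant lt) (huinv : LeftInvariant u)
    (hlinv : LeftInvariant l) (hcc : CompletelyConvex lt u l H) {a b c : G}
    (hab : (a : G ⧸ H) ≠ b) (hac : a ≠ c) (hb : Btwn lt u l a c b) (hr : r a c) :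
    QRel r H a c :=
  ⟨fun hmk => hab (mk_eq_of_btwn hltinv huinv hlinv hcc hac hmk hb).symm,
    a, c, rfl, rfl, 1, H.one_mem, by rwa [mul_one]⟩

variable [H.Normal]

theorem exists_rel_of_mk_eq_left (hr : LeftInvariant r) {a a' b : G}
    (ha : (a' : G ⧸ H) = a) (hab : r a b) : ∃ b' : G, (b' : G ⧸ H) = b ∧ r a' b' := by
  refine ⟨a' * a⁻¹ * b, ?_, ?_⟩
  · simp [QuotientGroup.mk_mul, ha]
  · simpa using hr (a' * a⁻¹) a b hab

theorem exists_rel_of_mk_eq_right (hr : LeftInvariant r) {a b b' : G}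
    (hb : (b' : G ⧸ H) = b) (hab : r a b) : ∃ a' : G, (a' : G ⧸ H) = a ∧ r a' b' := by
  refine ⟨b' * b⁻¹ * a, ?_, ?_⟩
  · simp [QuotientGroup.mk_mul, hb]
  · simpa using hr (b' * b⁻¹) a b hab

theorem QRel.exists_rel_left (hr : LeftInvariant r) {x y : G ⧸ H} (hq : QRel r H x y)
    {a : G} (ha : (a : G ⧸ H) = x) : ∃ b : G, (b : G ⧸ H) = y ∧ r a b := by
  obtain ⟨-, a₀, b₀, rfl, rfl, h, hh, hr₀⟩ := hq
  obtain ⟨b, hb, hab⟩ := exists_rel_of_mk_eq_left hr ha hr₀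
  exact ⟨b, hb.trans (QuotientGroup.mk_mul_of_mem b₀ hh), hab⟩

theorem QRel.exists_rel_right (hr : LeftInvariant r) {x y : G ⧸ H} (hq : QRel r H x y)
    {b : G} (hb : (b : G ⧸ H) = y) : ∃ a : G, (a : G ⧸ H) = x ∧ r a b := by
  obtain ⟨-, a₀, b₀, rfl, rfl, h, hh, hr₀⟩ := hq
  exact exists_rel_of_mk_eq_right hr (hb.trans (QuotientGroup.mk_mul_of_mem b₀ hh).symm) hr₀

end Quotient

/-- The four transitivity-type properties of the induced relations on `G ⧸ H`. -/
theorem stmt12 {G : Type*} [Group G] (lt u l : G → G → Prop)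
    (hirr : ∀ x : G, ¬ lt x x)
    (htrans : ∀ x y z : G, lt x y → lt y z → lt x z)
    (hltinv : LeftInvariant lt) (huinv : LeftInvariant u) (hlinv : LeftInvariant l)
    (hsce : IsSCExt lt u l)
    (H : Subgroup G) [H.Normal]
    (hcc : CompletelyConvex lt u l H) :
    ∀ g1 g2 g3 : G,
      (QRel lt H (g1 : G ⧸ H) (g2 : G ⧸ H) → QRel lt H (g2 : G ⧸ H) (g3 : G ⧸ H) →
        QRel lt H (g1 : G ⧸ H) (g3 : G ⧸ H)) ∧
      (QRel u H (g1 : G ⧸ H) (g2 : G ⧸ H) → QRel l H (g2 : G ⧸ H) (g3 : G ⧸ H) →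
        QRel lt H (g1 : G ⧸ H) (g3 : G ⧸ H)) ∧
      (QRel u H (g1 : G ⧸ H) (g2 : G ⧸ H) → QRel lt H (g3 : G ⧸ H) (g2 : G ⧸ H) →
        QRel u H (g1 : G ⧸ H) (g3 : G ⧸ H)) ∧
      (QRel l H (g1 : G ⧸ H) (g2 : G ⧸ H) → QRel lt H (g2 : G ⧸ H) (g3 : G ⧸ H) →
        QRel l H (g1 : G ⧸ H) (g3 : G ⧸ H)) := by
  intro g1 g2 g3
  have conclude : ∀ {r : G → G → Prop} {b c : G}, (c : G ⧸ H) = g3 → (g1 : G ⧸ H) ≠ b →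
      g1 ≠ c → Btwn lt u l g1 c b → r g1 c → QRel r H g1 g3 := by
    intro r b c hc hgb hac hb hr
    exact hc ▸ qrel_mk_of_btwn hltinv huinv hlinv hcc hgb hac hb hr
  refine ⟨fun h12 h23 => ?_, fun h12 h23 => ?_, fun h12 h32 => ?_, fun h12 h23 => ?_⟩
  · obtain ⟨b, hb, hab⟩ := h12.exists_rel_left hltinv rfl
    obtain ⟨c, hc, hbc⟩ := h23.exists_rel_left hltinv hb
    have hac := htrans g1 b c hab hbc
    exact conclude hc (hb ▸ h12.1) (fun e => hirr c (e ▸ hac)) (.inl ⟨hac, .inl ⟨hab, hbc⟩⟩) hac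
  · obtain ⟨b, hb, hab⟩ := h12.exists_rel_left huinv rfl
    obtain ⟨c, hc, hbc⟩ := h23.exists_rel_left hlinv hb
    have hac := hsce.lt_of_u_of_l hab hbc
    exact conclude hc (hb ▸ h12.1) (fun e => hirr c (e ▸ hac)) (.inl ⟨hac, .inr ⟨hab, hbc⟩⟩) hac
  · obtain ⟨b, hb, hab⟩ := h12.exists_rel_left huinv rfl
    obtain ⟨c, hc, hcb⟩ := h32.exists_rel_right hltinv hb
    have hgb : (g1 : G ⧸ H) ≠ b := hb ▸ h12.1
    obtain ⟨hinc, hac⟩ := hsce.u_of_u_of_lt hirr htrans (ne_of_apply_ne _ hgb) hab hcb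
    exact conclude hc hgb hinc.1 (.inr (.inr (.inr ⟨hac, .inl ⟨hab, hcb⟩⟩))) hac
  · obtain ⟨b, hb, hab⟩ := h12.exists_rel_left hlinv rfl
    obtain ⟨c, hc, hbc⟩ := h23.exists_rel_left hltinv hb
    have hgb : (g1 : G ⧸ H) ≠ b := hb ▸ h12.1
    obtain ⟨hinc, hac⟩ := hsce.l_of_l_of_lt hirr htrans (ne_of_apply_ne _ hgb) hab hbc
    exact conclude hc hgb hinc.1 (.inr (.inr (.inl ⟨hac, .inl ⟨hab, hbc⟩⟩))) hac

end PaperSC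
end

section
/- Let G be a group and let P, L, U ⊆ G be subsets satisfying: (1) P ∩ P⁻¹ = ∅, L⁻¹ = L, and U⁻¹ = U; (2) P·P ⊆ P; (3) L·P ⊆ L; (4) P·U ⊆ U; (5) U·L ⊆ P; (6) G is the disjoint union G = P ⊔ P⁻¹ ⊔ U ⊔ L ⊔ {e}. If moreover G = P ∪ P⁻¹ ∪ (P·P⁻¹) ∪ (P⁻¹·P), then the left-invariant partial order on G defined by g < h iff g⁻¹h ∈ P makes G a simply connected poset (i.e., this partial order is strongly connected and acyclic). -/
open Pointwise

namespace PaperSC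

variable {S : Type*}

/-!
Write `g < h` for `g⁻¹ * h ∈ P`. Since `(x⁻¹ * y) * (y⁻¹ * z) = x⁻¹ * z`, every condition `A * B ⊆ C`
turns into "if `x⁻¹y ∈ A` and `y⁻¹z ∈ B` then `x⁻¹z ∈ C`". The decomposition `x⁻¹y = a b⁻¹` or
`x⁻¹y = a⁻¹ b` with `a, b ∈ P` exhibits `x a = y b` as a common upper bound, resp. `x a⁻¹ = y b⁻¹` as a
common lower bound. For acyclicity, incomparable elements differ by an element of `U ∪ L`; an upper
bound excludes `L` because `L * P ⊆ L`, a lower bound excludes `U` because `P * U ⊆ U`, and then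
`y⁻¹z = (x⁻¹y)⁻¹ (x⁻¹z) ∈ U * L ⊆ P`.
-/

section Relations

variable {lt : S → S → Prop} {x y : S}

theorem SimU.exists_lt_lt (h : SimU lt x y) : ∃ z, lt x z ∧ lt y z := by
  obtain ⟨⟨hne, hxy, hyx⟩, z, rfl | hxz, rfl | hyz⟩ := h
  · exact absurd rfl hne
  · exact absurd hyz hyx
  · exact absurd hxz hxy
  · exact ⟨z, hxz, hyz⟩

theorem SimL.exists_lt_lt (h : SimL lt x y) : ∃ z, lt z x ∧ lt z y := by
  obtain ⟨⟨hne, hxy, hyx⟩, z, rfl | hzx, rfl | hzy⟩ := h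
  · exact absurd rfl hne
  · exact absurd hzy hxy
  · exact absurd hzx hyx
  · exact ⟨z, hzx, hzy⟩

end Relations

section Group

variable {G : Type*} [Group G] {P L U A B C : Set G} {x y z : G}

theorem inv_mul_mem_of_mul_subset (h : A * B ⊆ C) (hxy : x⁻¹ * y ∈ A) (hyz : y⁻¹ * z ∈ B) :
    x⁻¹ * z ∈ C := by
  simpa [mul_assoc] using h (Set.mul_mem_mul hxy hyz)

theorem leftInvariant_inv_mul_mem (P : Set G) : LeftInvariant (fun g h : G => g⁻¹ * h ∈ P) := by
  intro f g h hgh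
  simpa [mul_assoc] using hgh

theorem exists_common_upper_of_mem_mul_inv (h : x⁻¹ * y ∈ P * P⁻¹) :
    ∃ z, x⁻¹ * z ∈ P ∧ y⁻¹ * z ∈ P := by
  obtain ⟨a, ha, b, hb, hab⟩ := Set.mem_mul.mp h
  have hy : y = x * (a * b) := by rw [hab, mul_inv_cancel_left]
  exact ⟨x * a, by simpa using ha, by simpa [hy, mul_assoc] using hb⟩

theorem exists_common_lower_of_mem_inv_mul (h : x⁻¹ * y ∈ P⁻¹ * P) :
    ∃ z, z⁻¹ * x ∈ P ∧ z⁻¹ * y ∈ P := by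
  obtain ⟨a, ha, b, hb, hab⟩ := Set.mem_mul.mp h
  have hy : y = x * (a * b) := by rw [hab, mul_inv_cancel_left]
  exact ⟨x * a, by simpa using ha, by simpa [hy, mul_assoc] using hb⟩

theorem stronglyConnectedRel_of_forall_mem
    (hdir : ∀ g : G, g ∈ P ∨ g ∈ P⁻¹ ∨ g ∈ P * P⁻¹ ∨ g ∈ P⁻¹ * P) :
    StronglyConnectedRel (fun g h : G => g⁻¹ * h ∈ P) := by
  intro x y hinc
  rcases hdir (x⁻¹ * y) with h | h | h | h
  · exact absurd h hinc.2.1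
  · exact absurd (by simpa using h) hinc.2.2
  · obtain ⟨z, hxz, hyz⟩ := exists_common_upper_of_mem_mul_inv h
    exact .inl ⟨hinc, z, .inr hxz, .inr hyz⟩
  · obtain ⟨z, hzx, hzy⟩ := exists_common_lower_of_mem_inv_mul h
    exact .inr ⟨hinc, z, .inr hzx, .inr hzy⟩

theorem inv_mul_mem_or_mem_of_incomp (hcover : ∀ g : G, g ∈ P ∨ g ∈ P⁻¹ ∨ g ∈ U ∨ g ∈ L ∨ g = 1)
    (h : Incomp (fun g h : G => g⁻¹ * h ∈ P) x y) : x⁻¹ * y ∈ U ∨ x⁻¹ * y ∈ L := by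
  obtain ⟨hne, hxy, hyx⟩ := h
  rcases hcover (x⁻¹ * y) with h | h | h | h | h
  · exact absurd h hxy
  · exact absurd (by simpa using h) hyx
  · exact .inl h
  · exact .inr h
  · exact absurd (inv_mul_eq_one.mp h) hne

theorem inv_mul_mem_of_simU (hcover : ∀ g : G, g ∈ P ∨ g ∈ P⁻¹ ∨ g ∈ U ∨ g ∈ L ∨ g = 1)
    (hLP : L * P ⊆ L) (hPL_inter : P ∩ L = ∅) (h : SimU (fun g h : G => g⁻¹ * h ∈ P) x y) :
    x⁻¹ * y ∈ U := by
  obtain ⟨w, hxw, hyw⟩ := h.exists_lt_lt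
  refine (inv_mul_mem_or_mem_of_incomp hcover h.1).resolve_right fun hxy => ?_
  exact Set.eq_empty_iff_forall_notMem.mp hPL_inter _ ⟨hxw, inv_mul_mem_of_mul_subset hLP hxy hyw⟩

theorem inv_mul_mem_of_simL (hcover : ∀ g : G, g ∈ P ∨ g ∈ P⁻¹ ∨ g ∈ U ∨ g ∈ L ∨ g = 1)
    (hPU : P * U ⊆ U) (hPU_inter : P ∩ U = ∅) (h : SimL (fun g h : G => g⁻¹ * h ∈ P) x y) :
    x⁻¹ * y ∈ L := by
  obtain ⟨v, hvx, hvy⟩ := h.exists_lt_lt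
  refine (inv_mul_mem_or_mem_of_incomp hcover h.1).resolve_left fun hxy => ?_
  exact Set.eq_empty_iff_forall_notMem.mp hPU_inter _ ⟨hvy, inv_mul_mem_of_mul_subset hPU hvx hxy⟩

theorem acyclicRel_of_mul_subset (hcover : ∀ g : G, g ∈ P ∨ g ∈ P⁻¹ ∨ g ∈ U ∨ g ∈ L ∨ g = 1)
    (hU : U⁻¹ = U) (hLP : L * P ⊆ L) (hPU : P * U ⊆ U) (hUL : U * L ⊆ P)
    (hPU_inter : P ∩ U = ∅) (hPL_inter : P ∩ L = ∅) : AcyclicRel (fun g h : G => g⁻¹ * h ∈ P) := by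
  intro x y z hxy hxz
  have hyx : y⁻¹ * x ∈ U := by
    rw [← hU, Set.mem_inv, mul_inv_rev, inv_inv]
    exact inv_mul_mem_of_simU hcover hLP hPL_inter hxy
  exact inv_mul_mem_of_mul_subset hUL hyx (inv_mul_mem_of_simL hcover hPU hPU_inter hxz)

end Group

theorem stmt15_general {G : Type*} [Group G] (P L U : Set G)
    (h1U : U⁻¹ = U)
    (h2 : P * P ⊆ P) (h3 : L * P ⊆ L) (h4 : P * U ⊆ U) (h5 : U * L ⊆ P)
    (h6cover : ∀ g : G, g ∈ P ∨ g ∈ P⁻¹ ∨ g ∈ U ∨ g ∈ L ∨ g = 1)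
    (h6a : P ∩ U = ∅) (h6b : P ∩ L = ∅)
    (h6f : (1 : G) ∉ P)
    (hdir : ∀ g : G, g ∈ P ∨ g ∈ P⁻¹ ∨ g ∈ P * P⁻¹ ∨ g ∈ P⁻¹ * P) :
    (∀ x : G, ¬ (fun g h : G => g⁻¹ * h ∈ P) x x) ∧
    (∀ x y z : G, (fun g h : G => g⁻¹ * h ∈ P) x y → (fun g h : G => g⁻¹ * h ∈ P) y z →
      (fun g h : G => g⁻¹ * h ∈ P) x z) ∧
    LeftInvariant (fun g h : G => g⁻¹ * h ∈ P) ∧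
    StronglyConnectedRel (fun g h : G => g⁻¹ * h ∈ P) ∧
    AcyclicRel (fun g h : G => g⁻¹ * h ∈ P) := by
  refine ⟨fun x => by simpa using h6f, fun _ _ _ => inv_mul_mem_of_mul_subset h2,
    leftInvariant_inv_mul_mem P, stronglyConnectedRel_of_forall_mem hdir, ?_⟩
  exact acyclicRel_of_mul_subset h6cover h1U h3 h4 h5 h6a h6b

/-- If `P, L, U` satisfy (1)-(6) and moreover
`G = P ∪ P⁻¹ ∪ (P·P⁻¹) ∪ (P⁻¹·P)`, then the left-invariant partial order `g < h ↔ g⁻¹h ∈ P`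
makes `G` a simply connected poset (strongly connected and acyclic). -/
theorem stmt15 {G : Type*} [Group G] (P L U : Set G)
    (h1P : P ∩ P⁻¹ = ∅) (h1L : L⁻¹ = L) (h1U : U⁻¹ = U)
    (h2 : P * P ⊆ P) (h3 : L * P ⊆ L) (h4 : P * U ⊆ U) (h5 : U * L ⊆ P)
    (h6cover : ∀ g : G, g ∈ P ∨ g ∈ P⁻¹ ∨ g ∈ U ∨ g ∈ L ∨ g = 1)
    (h6a : P ∩ U = ∅) (h6b : P ∩ L = ∅) (h6c : P⁻¹ ∩ U = ∅) (h6d : P⁻¹ ∩ L = ∅)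
    (h6e : U ∩ L = ∅) (h6f : (1 : G) ∉ P) (h6g : (1 : G) ∉ P⁻¹)
    (h6h : (1 : G) ∉ U) (h6i : (1 : G) ∉ L)
    (hdir : ∀ g : G, g ∈ P ∨ g ∈ P⁻¹ ∨ g ∈ P * P⁻¹ ∨ g ∈ P⁻¹ * P) :
    (∀ x : G, ¬ (fun g h : G => g⁻¹ * h ∈ P) x x) ∧
    (∀ x y z : G, (fun g h : G => g⁻¹ * h ∈ P) x y → (fun g h : G => g⁻¹ * h ∈ P) y z →
      (fun g h : G => g⁻¹ * h ∈ P) x z) ∧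
    LeftInvariant (fun g h : G => g⁻¹ * h ∈ P) ∧
    StronglyConnectedRel (fun g h : G => g⁻¹ * h ∈ P) ∧
    AcyclicRel (fun g h : G => g⁻¹ * h ∈ P) :=
  stmt15_general P L U h1U h2 h3 h4 h5 h6cover h6a h6b h6f hdir

end PaperSC
end

section
/- Let G be a group with more than one element in which every element has finite order (a nontrivial torsion group). Then every left-invariant simply connected extension of a left-invariant partial order on G is trivial; equivalently, G admits no left-invariant partial order with a nontrivial left-invariant simply connected extension. -/
/-!
In a left-invariant partial order, `1 < g` gives `1 < g < g² < ⋯`, which is impossible once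
`gⁿ = 1`; so on a torsion group the order is empty and every pair of distinct elements is
incomparable. If some pair `(x, y)` were of type `∼ₗ` and another `(p, q)` of type `∼ᵤ`, translating
the latter to `(x, x p⁻¹ q)` and applying acyclicity would give the comparability
`x p⁻¹ q < y`, which cannot hold.
-/

open Pointwise

namespace PaperSC

variable {S : Type*}

section LeftInvariantOrder

variable {G : Type*} [Group G] {lt : G → G → Prop}

theorem one_lt_pow_succ_of_one_lt (htrans : ∀ x y z : G, lt x y → lt y z → lt x z)
    (hlt : LeftInvariant lt) {g : G} (hg : lt 1 g) (n : ℕ) : lt 1 (g ^ (n + 1)) := by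
  induction n with
  | zero => simpa using hg
  | succ k ih =>
    have hstep : lt (g ^ (k + 1)) (g ^ (k + 2)) := by
      simpa [pow_succ] using hlt (g ^ (k + 1)) 1 g hg
    exact htrans _ _ _ ih hstep

theorem not_lt_of_isOfFinOrder_inv_mul (hirr : ∀ x : G, ¬ lt x x)
    (htrans : ∀ x y z : G, lt x y → lt y z → lt x z) (hlt : LeftInvariant lt) {a b : G}
    (hab : IsOfFinOrder (a⁻¹ * b)) : ¬ lt a b := by
  intro h
  have hone : lt 1 (a⁻¹ * b) := by simpa using hlt a⁻¹ a b h
  obtain ⟨n, hn, hpow⟩ := isOfFinOrder_iff_pow_eq_one.mp hab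
  have := one_lt_pow_succ_of_one_lt htrans hlt hone (n - 1)
  rw [Nat.sub_add_cancel hn, hpow] at this
  exact hirr 1 this

end LeftInvariantOrder

namespace IsSCExt

variable {lt u l : S → S → Prop}

theorem u_or_l_of_incomp (hsc : IsSCExt lt u l) {x y : S} (h : Incomp lt x y) :
    u x y ∨ l x y := by
  obtain ⟨_, hlt, hgt⟩ := h
  rcases (hsc.exactly_one x y ‹_›).1 with h | h | h | h
  exacts [absurd h hlt, absurd h hgt, Or.inl h, Or.inr h]

theorem lt_of_u_of_l_s16 {G : Type*} [Group G] {lt u l : G → G → Prop} (hsc : IsSCExt lt u l)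
    (hu : LeftInvariant u) {p q x y : G} (hpq : u p q) (hxy : l x y) :
    lt (x * p⁻¹ * q) y := by
  have hx : u x (x * p⁻¹ * q) := by simpa [mul_assoc] using hu (x * p⁻¹) p q hpq
  exact hsc.acyclic _ _ _ hx hxy

end IsSCExt

/-- A nontrivial torsion group admits no left-invariant partial order with a
nontrivial left-invariant simply connected extension: every such extension is trivial
(there is an incomparable pair, and all incomparable pairs are of a single type). -/
theorem stmt16 {G : Type*} [Group G] [Nontrivial G]
    (htor : ∀ g : G, IsOfFinOrder g) :
    ∀ lt u l : G → G → Prop,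
      (∀ x : G, ¬ lt x x) → (∀ x y z : G, lt x y → lt y z → lt x z) →
      LeftInvariant lt → LeftInvariant u → LeftInvariant l →
      IsSCExt lt u l →
      ((∃ x y : G, Incomp lt x y) ∧
        ((∀ x y : G, Incomp lt x y → u x y) ∨ (∀ x y : G, Incomp lt x y → l x y))) := by
  intro lt u l hirr htrans hlt hu _ hsc
  have hempty : ∀ a b : G, ¬ lt a b := fun a b ↦
    not_lt_of_isOfFinOrder_inv_mul hirr htrans hlt (htor (a⁻¹ * b))
  have hincomp : ∀ x y : G, x ≠ y → Incomp lt x y := fun x y hxy ↦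
    ⟨hxy, hempty x y, hempty y x⟩
  obtain ⟨a, b, hab⟩ := exists_pair_ne G
  refine ⟨⟨a, b, hincomp a b hab⟩, ?_⟩
  by_contra! ⟨⟨x, y, hxy, hnu⟩, ⟨p, q, hpq, hnl⟩⟩
  have hupq : u p q := (hsc.u_or_l_of_incomp hpq).resolve_right hnl
  have hlxy : l x y := (hsc.u_or_l_of_incomp hxy).resolve_left hnu
  exact hempty _ _ (hsc.lt_of_u_of_l_s16 hu hupq hlxy)

end PaperSC
end

section
/- Let G be a group with a left-invariant partial order < and a left-invariant rectifiable simply connected extension (∼_u, ∼_l), and let a, b ∈ G be distinct. Then, computing between-sets B in G⁺ with the induced order <⁺ and relations (∼_u⁺, ∼_l⁺): a < b if and only if {a_+, b_−} ⊆ B_{a_−,b_+}; a ∼_u b if and only if {a_+, b_+} ⊆ B_{a_−,b_−}; and a ∼_l b if and only if {a_−, b_−} ⊆ B_{a_+,b_+}. -/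
open Pointwise

namespace PaperSC

variable {S : Type*}

/-- The order on `G⁺ = G × {-1, 0, 1}`: `(g,i) <⁺ (h,j)` iff `g < h`, or `g = h` and `i < j`. -/
def PLt {G : Type*} (lt : G → G → Prop) (x y : G × SignType) : Prop :=
  lt x.1 y.1 ∨ (x.1 = y.1 ∧ x.2 < y.2)

/-- `(g,i) ∼ᵤ⁺ (h,j)` iff `g ∼ᵤ h`. -/
def PU {G : Type*} (u : G → G → Prop) (x y : G × SignType) : Prop := u x.1 y.1

/-- `(g,i) ∼ₗ⁺ (h,j)` iff `g ∼ₗ h`. -/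
def PL {G : Type*} (l : G → G → Prop) (x y : G × SignType) : Prop := l x.1 y.1

/-!
Over distinct `a ≠ b`, points of `G⁺` lying over `a` and over `b` are related exactly as `a` and
`b` are, while two points over the same element are compared only through their signs. Hence each
between-condition unfolds to a propositional formula in `a < b`, `b < a`, `a ∼ᵤ b`, `a ∼ₗ b`, and
since exactly one of these four holds, the formula pins down the relation between `a` and `b`.
-/

theorem IsSCExt.u_comm {lt u l : S → S → Prop} (h : IsSCExt lt u l) (x y : S) : u x y ↔ u y x :=
  ⟨h.u_symm x y, h.u_symm y x⟩

theorem IsSCExt.l_comm {lt u l : S → S → Prop} (h : IsSCExt lt u l) (x y : S) : l x y ↔ l y x :=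
  ⟨h.l_symm x y, h.l_symm y x⟩

theorem mem_bSet_iff_of_ne {lt u l : S → S → Prop} {a c x : S} (hac : a ≠ c) :
    x ∈ BSet lt u l a c ↔ x = a ∨ x = c ∨ Btwn lt u l a c x := by
  simp [BSet, hac, or_assoc]

theorem pair_subset_bSet_iff {lt u l : S → S → Prop} {a c x y : S} (hac : a ≠ c)
    (hx : x ≠ a ∧ x ≠ c) (hy : y ≠ a ∧ y ≠ c) :
    {x, y} ⊆ BSet lt u l a c ↔ Btwn lt u l a c x ∧ Btwn lt u l a c y := by
  simp [Set.insert_subset_iff, mem_bSet_iff_of_ne hac, hx, hy]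

theorem pair_subset_bSet_mk_iff {G : Type*} {lt u l : G × SignType → G × SignType → Prop}
    {a b : G} {i j i' j' : SignType} (hab : a ≠ b) (hi : i ≠ i') (hj : j ≠ j') :
    {(a, i), (b, j)} ⊆ BSet lt u l (a, i') (b, j') ↔
      Btwn lt u l (a, i') (b, j') (a, i) ∧ Btwn lt u l (a, i') (b, j') (b, j) :=
  pair_subset_bSet_iff (by simp [hab]) (by simp [hi, hab]) (by simp [hj, hab.symm])

section Plus

variable {G : Type*} {lt u l : G → G → Prop}

theorem pLt_mk_of_ne {g h : G} (hgh : g ≠ h) (i j : SignType) :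
    PLt lt (g, i) (h, j) ↔ lt g h := by
  simp [PLt, hgh]

theorem pLt_mk_self (hirr : ∀ x : G, ¬ lt x x) (g : G) (i j : SignType) :
    PLt lt (g, i) (g, j) ↔ i < j := by
  simp [PLt, hirr]

theorem lt_iff_subset_bSet_minus_plus (hirr : ∀ x : G, ¬ lt x x) (hS : IsSCExt lt u l)
    {a b : G} (hab : a ≠ b) :
    lt a b ↔ ({(a, 1), (b, -1)} : Set (G × SignType)) ⊆
      BSet (PLt lt) (PU u) (PL l) (a, -1) (b, 1) := by
  rw [pair_subset_bSet_mk_iff hab (by decide) (by decide)]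
  simp only [Btwn, PU, PL, pLt_mk_of_ne hab, pLt_mk_of_ne hab.symm, pLt_mk_self hirr,
    hS.u_comm b a, hS.l_comm b a, SignType.neg_one_lt_one, SignType.not_one_lt, and_true,
    true_and, and_false, or_false, false_or]
  obtain ⟨hcases, hlt, hgt, hu⟩ := hS.exactly_one a b hab
  tauto

theorem u_iff_subset_bSet_minus_minus (hirr : ∀ x : G, ¬ lt x x) (hS : IsSCExt lt u l)
    {a b : G} (hab : a ≠ b) :
    u a b ↔ ({(a, 1), (b, 1)} : Set (G × SignType)) ⊆
      BSet (PLt lt) (PU u) (PL l) (a, -1) (b, -1) := by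
  rw [pair_subset_bSet_mk_iff hab (by decide) (by decide)]
  simp only [Btwn, PU, PL, pLt_mk_of_ne hab, pLt_mk_of_ne hab.symm, pLt_mk_self hirr,
    hS.u_comm b a, hS.l_comm b a, SignType.neg_one_lt_one, SignType.not_one_lt, and_true,
    true_and, and_false, or_false, false_or]
  obtain ⟨hcases, hlt, hgt, hu⟩ := hS.exactly_one a b hab
  tauto

theorem l_iff_subset_bSet_plus_plus (hirr : ∀ x : G, ¬ lt x x) (hS : IsSCExt lt u l)
    {a b : G} (hab : a ≠ b) :
    l a b ↔ ({(a, -1), (b, -1)} : Set (G × SignType)) ⊆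
      BSet (PLt lt) (PU u) (PL l) (a, 1) (b, 1) := by
  rw [pair_subset_bSet_mk_iff hab (by decide) (by decide)]
  simp only [Btwn, PU, PL, pLt_mk_of_ne hab, pLt_mk_of_ne hab.symm, pLt_mk_self hirr,
    hS.u_comm b a, hS.l_comm b a, SignType.neg_one_lt_one, SignType.not_one_lt, and_true,
    and_false, false_and, or_false, false_or]
  obtain ⟨hcases, hlt, hgt, hu⟩ := hS.exactly_one a b hab
  tauto

end Plus

theorem stmt18_general {G : Type*} (lt u l : G → G → Prop)
    (hirr : ∀ x : G, ¬ lt x x)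
    (hsce : IsSCExt lt u l)
    (a b : G) (hab : a ≠ b) :
    (lt a b ↔ ({(a, 1), (b, -1)} : Set (G × SignType)) ⊆
      BSet (PLt lt) (PU u) (PL l) ((a, -1) : G × SignType) ((b, 1) : G × SignType)) ∧
    (u a b ↔ ({(a, 1), (b, 1)} : Set (G × SignType)) ⊆
      BSet (PLt lt) (PU u) (PL l) ((a, -1) : G × SignType) ((b, -1) : G × SignType)) ∧
    (l a b ↔ ({(a, -1), (b, -1)} : Set (G × SignType)) ⊆
      BSet (PLt lt) (PU u) (PL l) ((a, 1) : G × SignType) ((b, 1) : G × SignType)) :=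
  ⟨lt_iff_subset_bSet_minus_plus hirr hsce hab, u_iff_subset_bSet_minus_minus hirr hsce hab,
    l_iff_subset_bSet_plus_plus hirr hsce hab⟩

/-- Characterization of the order relations in `G` by between sets in `G⁺`,
where `g₋ = (g,-1)` and `g₊ = (g,1)`. -/
theorem stmt18 {G : Type*} [Group G] (lt u l : G → G → Prop)
    (hirr : ∀ x : G, ¬ lt x x)
    (htrans : ∀ x y z : G, lt x y → lt y z → lt x z)
    (hltinv : LeftInvariant lt) (huinv : LeftInvariant u) (hlinv : LeftInvariant l)
    (hsce : IsSCExt lt u l)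
    (hrect : Rectifiable lt u l)
    (a b : G) (hab : a ≠ b) :
    (lt a b ↔ ({(a, 1), (b, -1)} : Set (G × SignType)) ⊆
      BSet (PLt lt) (PU u) (PL l) ((a, -1) : G × SignType) ((b, 1) : G × SignType)) ∧
    (u a b ↔ ({(a, 1), (b, 1)} : Set (G × SignType)) ⊆
      BSet (PLt lt) (PU u) (PL l) ((a, -1) : G × SignType) ((b, -1) : G × SignType)) ∧
    (l a b ↔ ({(a, -1), (b, -1)} : Set (G × SignType)) ⊆
      BSet (PLt lt) (PU u) (PL l) ((a, 1) : G × SignType) ((b, 1) : G × SignType)) :=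
  stmt18_general lt u l hirr hsce a b hab

end PaperSC
end

section
/- Let G be a group with a left-invariant partial order < and a left-invariant rectifiable simply connected extension (∼_u, ∼_l). Define a relation R on G⁺ by: x R y if and only if x = y, or x, y ∈ G × {−1, 1} and B_{x,y} = {x, y} (computed in G⁺ with the induced order <⁺ and relations (∼_u⁺, ∼_l⁺)). Then R is an equivalence relation on G⁺. -/
open Pointwise

namespace PaperSC

variable {S : Type*}

/-!
In `G⁺` the point `(a, 1)` sits just above `a` and `(b, -1)` just below `b`, while the points
`(k, 0)` form a copy of `G`. Two distinct signed points have nothing between them exactly when no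
`(k, 0)` lies between them, i.e. when they face each other across a pair `a, b` of `G` with
`B_{a,b} = {a, b}`: they are `(a, 1), (b, -1)` with `a < b`, or `(a, -1), (b, -1)` with `a ∼ₗ b`,
or `(a, 1), (b, 1)` with `a ∼ᵤ b`. Transitivity of `R` thus reduces to composing such pairs of `G`
(two of them `a < b`, `c < b` with a common top give one `a ∼ᵤ c`, and so on), each composition
being a case analysis on how a would-be intermediate point compares with the middle element.
-/

structure IsSCOrder (lt u l : S → S → Prop) : Prop where
  irrefl : ∀ x, ¬ lt x x
  trans : ∀ x y z, lt x y → lt y z → lt x z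
  toIsSCExt : IsSCExt lt u l

namespace IsSCOrder

variable {lt u l : S → S → Prop} (hS : IsSCOrder lt u l) {a b c : S}
include hS

theorem ne_of_lt (h : lt a b) : a ≠ b := fun e => hS.irrefl a (e ▸ h)

theorem lt_asymm (h : lt a b) : ¬ lt b a := fun h' => hS.irrefl a (hS.trans _ _ _ h h')

theorem u_symm (h : u a b) : u b a := hS.toIsSCExt.u_symm _ _ h

theorem l_symm (h : l a b) : l b a := hS.toIsSCExt.l_symm _ _ h

theorem trichotomy_of_ne (h : a ≠ b) : lt a b ∨ lt b a ∨ u a b ∨ l a b :=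
  (hS.toIsSCExt.exactly_one a b h).1

theorem not_u_of_lt (h : lt a b) : ¬ u a b :=
  ((hS.toIsSCExt.exactly_one a b (hS.ne_of_lt h)).2.1 h).2.1

theorem not_l_of_lt (h : lt a b) : ¬ l a b :=
  ((hS.toIsSCExt.exactly_one a b (hS.ne_of_lt h)).2.1 h).2.2

theorem not_u_of_gt (h : lt b a) : ¬ u a b := fun hu => hS.not_u_of_lt h (hS.u_symm hu)

theorem not_l_of_gt (h : lt b a) : ¬ l a b := fun hl => hS.not_l_of_lt h (hS.l_symm hl)

theorem not_u_of_l (h : l a b) : ¬ u a b := fun hu => hS.irrefl b (hS.toIsSCExt.acyclic a b b hu h)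

theorem not_u_of_lt_of_lt (hne : a ≠ b) (ha : lt c a) (hb : lt c b) : ¬ u a b := fun hu =>
  have hinc : Incomp lt a b := ⟨hne, fun h => hS.not_u_of_lt h hu, fun h => hS.not_u_of_gt h hu⟩
  hS.not_u_of_l (hS.toIsSCExt.l_of_lb a b hinc ⟨c, Or.inr ha, Or.inr hb⟩) hu

theorem not_l_of_lt_of_lt (hne : a ≠ b) (ha : lt a c) (hb : lt b c) : ¬ l a b := fun hl =>
  have hinc : Incomp lt a b := ⟨hne, fun h => hS.not_l_of_lt h hl, fun h => hS.not_l_of_gt h hl⟩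
  hS.not_u_of_l hl (hS.toIsSCExt.u_of_ub a b hinc ⟨c, Or.inr ha, Or.inr hb⟩)

end IsSCOrder

/- The pairs with `B_{a,b} = {a, b}`, one structure for each of the relations `a < b`, `a ∼ₗ b`,
`a ∼ᵤ b` in which they can stand. -/

structure AdjLt (lt u l : S → S → Prop) (a b : S) : Prop where
  rel : lt a b
  no_lt_mid : ∀ k, lt a k → ¬ lt k b
  no_ul_mid : ∀ k, u a k → ¬ l k b

structure AdjL (lt l : S → S → Prop) (a b : S) : Prop where
  rel : l a b
  no_mid_left : ∀ k, l a k → ¬ lt k b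
  no_mid_right : ∀ k, l b k → ¬ lt k a

structure AdjU (lt u : S → S → Prop) (a b : S) : Prop where
  rel : u a b
  no_mid_left : ∀ k, u a k → ¬ lt b k
  no_mid_right : ∀ k, u b k → ¬ lt a k

section Composition

variable {lt u l : S → S → Prop} (hS : IsSCOrder lt u l) {a b c : S}
include hS

theorem AdjL.symm (h : AdjL lt l a b) : AdjL lt l b a :=
  ⟨hS.l_symm h.rel, h.no_mid_right, h.no_mid_left⟩

theorem AdjU.symm (h : AdjU lt u a b) : AdjU lt u b a :=
  ⟨hS.u_symm h.rel, h.no_mid_right, h.no_mid_left⟩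

theorem AdjLt.not_u_lt_of_adjLt (h1 : AdjLt lt u l a b) (h2 : AdjLt lt u l c b) (k : S)
    (hak : u a k) (hck : lt c k) : False := by
  rcases eq_or_ne k b with rfl | hkb
  · exact hS.not_u_of_lt h1.rel hak
  rcases hS.trichotomy_of_ne hkb with hkb' | hbk | hkb' | hkb'
  · exact h2.no_lt_mid k hck hkb'
  · exact hS.not_u_of_lt (hS.trans _ _ _ h1.rel hbk) hak
  · exact hS.not_u_of_lt_of_lt hkb hck h2.rel hkb'
  · exact h1.no_ul_mid k hak hkb'

theorem AdjLt.adjU_of_adjLt (h1 : AdjLt lt u l a b) (h2 : AdjLt lt u l c b) (hne : a ≠ c) :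
    AdjU lt u a c := by
  refine ⟨?_, h1.not_u_lt_of_adjLt hS h2, h2.not_u_lt_of_adjLt hS h1⟩
  rcases hS.trichotomy_of_ne hne with hac | hca | hac | hac
  · exact (h1.no_lt_mid c hac h2.rel).elim
  · exact (h2.no_lt_mid a hca h1.rel).elim
  · exact hac
  · exact (hS.not_l_of_lt_of_lt hne h1.rel h2.rel hac).elim

theorem AdjLt.not_l_lt_of_adjLt (h1 : AdjLt lt u l b a) (h2 : AdjLt lt u l b c) (k : S)
    (hak : l a k) (hkc : lt k c) : False := by
  rcases eq_or_ne k b with rfl | hkb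
  · exact hS.not_l_of_gt h1.rel hak
  rcases hS.trichotomy_of_ne hkb with hkb' | hbk | hkb' | hkb'
  · exact hS.not_l_of_gt (hS.trans _ _ _ hkb' h1.rel) hak
  · exact h2.no_lt_mid k hbk hkc
  · exact h1.no_ul_mid k (hS.u_symm hkb') (hS.l_symm hak)
  · exact hS.not_l_of_lt_of_lt hkb hkc h2.rel hkb'

theorem AdjLt.adjL_of_adjLt (h1 : AdjLt lt u l b a) (h2 : AdjLt lt u l b c) (hne : a ≠ c) :
    AdjL lt l a c := by
  refine ⟨?_, h1.not_l_lt_of_adjLt hS h2, h2.not_l_lt_of_adjLt hS h1⟩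
  rcases hS.trichotomy_of_ne hne with hac | hca | hac | hac
  · exact (h2.no_lt_mid a h1.rel hac).elim
  · exact (h1.no_lt_mid c h2.rel hca).elim
  · exact (hS.not_u_of_lt_of_lt hne h1.rel h2.rel hac).elim
  · exact hac

theorem AdjLt.trans_adjL (h1 : AdjLt lt u l a b) (h2 : AdjL lt l b c) : AdjLt lt u l a c := by
  rcases eq_or_ne a c with rfl | hne
  · exact (hS.not_l_of_gt h1.rel h2.rel).elim
  refine ⟨?_, fun k hak hkc => ?_, fun k hak hkc => ?_⟩
  · rcases hS.trichotomy_of_ne hne with hac | hca | hac | hac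
    · exact hac
    · exact (hS.not_l_of_gt (hS.trans _ _ _ hca h1.rel) h2.rel).elim
    · exact (h1.no_ul_mid c hac (hS.l_symm h2.rel)).elim
    · exact (h2.no_mid_right a (hS.l_symm hac) h1.rel).elim
  · rcases eq_or_ne k b with rfl | hkb
    · exact hS.not_l_of_lt hkc h2.rel
    rcases hS.trichotomy_of_ne hkb with hkb' | hbk | hkb' | hkb'
    · exact h1.no_lt_mid k hak hkb'
    · exact hS.not_l_of_lt (hS.trans _ _ _ hbk hkc) h2.rel
    · exact hS.not_u_of_lt_of_lt hkb hak h1.rel hkb'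
    · exact h2.no_mid_left k (hS.l_symm hkb') hkc
  · rcases eq_or_ne k b with rfl | hkb
    · exact hS.not_u_of_lt h1.rel hak
    rcases hS.trichotomy_of_ne hkb with hkb' | hbk | hkb' | hkb'
    · exact h2.no_mid_right k (hS.l_symm hkc) hkb'
    · exact hS.not_u_of_lt (hS.trans _ _ _ h1.rel hbk) hak
    · exact hS.not_l_of_lt (hS.toIsSCExt.acyclic k b c hkb' hkc) h2.rel
    · exact h1.no_ul_mid k hak hkb'

theorem AdjU.trans_adjLt (h1 : AdjU lt u a b) (h2 : AdjLt lt u l b c) : AdjLt lt u l a c := by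
  rcases eq_or_ne a c with rfl | hne
  · exact (hS.not_u_of_gt h2.rel h1.rel).elim
  refine ⟨?_, fun k hak hkc => ?_, fun k hak hkc => ?_⟩
  · rcases hS.trichotomy_of_ne hne with hac | hca | hac | hac
    · exact hac
    · exact (hS.not_u_of_gt (hS.trans _ _ _ h2.rel hca) h1.rel).elim
    · exact (h1.no_mid_left c hac h2.rel).elim
    · exact (h2.no_ul_mid a (hS.u_symm h1.rel) hac).elim
  · rcases eq_or_ne k b with rfl | hkb
    · exact hS.not_u_of_lt hak h1.rel
    rcases hS.trichotomy_of_ne hkb with hkb' | hbk | hkb' | hkb'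
    · exact hS.not_u_of_lt (hS.trans _ _ _ hak hkb') h1.rel
    · exact h2.no_lt_mid k hbk hkc
    · exact h1.no_mid_right k (hS.u_symm hkb') hak
    · exact hS.not_l_of_lt_of_lt hkb hkc h2.rel hkb'
  · rcases eq_or_ne k b with rfl | hkb
    · exact hS.not_l_of_lt h2.rel hkc
    rcases hS.trichotomy_of_ne hkb with hkb' | hbk | hkb' | hkb'
    · exact hS.not_l_of_lt (hS.trans _ _ _ hkb' h2.rel) hkc
    · exact h1.no_mid_left k hak hbk
    · exact h2.no_ul_mid k (hS.u_symm hkb') hkc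
    · exact hS.not_u_of_lt (hS.toIsSCExt.acyclic k a b (hS.u_symm hak) hkb') h1.rel

theorem AdjL.not_l_lt_of_adjL (h1 : AdjL lt l a b) (h2 : AdjL lt l b c) (k : S)
    (hak : l a k) (hkc : lt k c) : False := by
  rcases eq_or_ne k b with rfl | hkb
  · exact hS.not_l_of_lt hkc h2.rel
  rcases hS.trichotomy_of_ne hkb with hkb' | hbk | hkb' | hkb'
  · exact h1.no_mid_left k hak hkb'
  · exact hS.not_l_of_lt (hS.trans _ _ _ hbk hkc) h2.rel
  · exact hS.not_l_of_gt (hS.toIsSCExt.acyclic k b a hkb' (hS.l_symm hak)) h1.rel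
  · exact h2.no_mid_left k (hS.l_symm hkb') hkc

theorem AdjL.trans (h1 : AdjL lt l a b) (h2 : AdjL lt l b c) (hne : a ≠ c) :
    AdjL lt l a c := by
  refine ⟨?_, h1.not_l_lt_of_adjL hS h2, (h2.symm hS).not_l_lt_of_adjL hS (h1.symm hS)⟩
  rcases hS.trichotomy_of_ne hne with hac | hca | hac | hac
  · exact (h2.no_mid_left a (hS.l_symm h1.rel) hac).elim
  · exact (h1.no_mid_right c h2.rel hca).elim
  · exact (hS.not_l_of_gt (hS.toIsSCExt.acyclic a c b hac h1.rel) h2.rel).elim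
  · exact hac

theorem AdjU.not_u_lt_of_adjU (h1 : AdjU lt u a b) (h2 : AdjU lt u b c) (k : S)
    (hak : u a k) (hck : lt c k) : False := by
  rcases eq_or_ne k b with rfl | hkb
  · exact hS.not_u_of_gt hck h2.rel
  rcases hS.trichotomy_of_ne hkb with hkb' | hbk | hkb' | hkb'
  · exact hS.not_u_of_gt (hS.trans _ _ _ hck hkb') h2.rel
  · exact h1.no_mid_left k hak hbk
  · exact h2.no_mid_left k (hS.u_symm hkb') hck
  · exact hS.not_u_of_lt (hS.toIsSCExt.acyclic k a b (hS.u_symm hak) hkb') h1.rel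

theorem AdjU.trans (h1 : AdjU lt u a b) (h2 : AdjU lt u b c) (hne : a ≠ c) :
    AdjU lt u a c := by
  refine ⟨?_, h1.not_u_lt_of_adjU hS h2, (h2.symm hS).not_u_lt_of_adjU hS (h1.symm hS)⟩
  rcases hS.trichotomy_of_ne hne with hac | hca | hac | hac
  · exact (h1.no_mid_right c h2.rel hac).elim
  · exact (h2.no_mid_left a (hS.u_symm h1.rel) hca).elim
  · exact hac
  · exact (hS.not_u_of_lt (hS.toIsSCExt.acyclic a b c h1.rel hac) h2.rel).elim

end Composition

section Between

variable {lt u l : S → S → Prop} {a b c : S}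

theorem Btwn.of_lt (hac : lt a c) (h : lt a b ∧ lt b c ∨ u a b ∧ l b c) : Btwn lt u l a c b :=
  Or.inl ⟨hac, h⟩

theorem Btwn.of_l (hac : l a c) (h : l a b ∧ lt b c ∨ l c b ∧ lt b a) : Btwn lt u l a c b :=
  Or.inr (Or.inr (Or.inl ⟨hac, h⟩))

theorem Btwn.of_u (hac : u a c) (h : u a b ∧ lt c b ∨ u c b ∧ lt a b) : Btwn lt u l a c b :=
  Or.inr (Or.inr (Or.inr ⟨hac, h⟩))

theorem Btwn.symm (hu : ∀ x y, u x y → u y x) (hl : ∀ x y, l x y → l y x)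
    (h : Btwn lt u l a c b) : Btwn lt u l c a b := by
  rcases h with h | h | ⟨h1, h2⟩ | ⟨h1, h2⟩
  · exact Or.inr (Or.inl h)
  · exact Or.inl h
  · exact Or.inr (Or.inr (Or.inl ⟨hl _ _ h1, h2.symm⟩))
  · exact Or.inr (Or.inr (Or.inr ⟨hu _ _ h1, h2.symm⟩))

theorem bset_eq_pair_of_forall_not_btwn (h : ∀ x, ¬ Btwn lt u l a b x) :
    BSet lt u l a b = {a, b} := by
  simp [BSet, h]

theorem eq_or_eq_of_btwn (hB : BSet lt u l a b = {a, b}) (hne : a ≠ b)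
    (hc : Btwn lt u l a b c) : c = a ∨ c = b := by
  have hmem : c ∈ BSet lt u l a b := Or.inr ⟨hne, hc⟩
  rwa [hB] at hmem

end Between

section Plus

variable {lt u l : S → S → Prop} {a b g h k : S} {i j s : SignType}

theorem plt_one_left : PLt lt (a, 1) (k, s) ↔ lt a k := by
  simp [PLt, SignType.not_one_lt]

theorem plt_neg_one_right : PLt lt (k, s) (b, -1) ↔ lt k b := by
  simp [PLt, SignType.not_lt_neg_one]

theorem plt_iff_of_ne (hab : a ≠ b) : PLt lt (a, i) (b, j) ↔ lt a b := by
  simp [PLt, hab]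

theorem plt_of_lt (hab : lt a b) : PLt lt (a, i) (b, j) := Or.inl hab

theorem plt_of_snd_lt (hij : i < j) : PLt lt (a, i) (a, j) := Or.inr ⟨rfl, hij⟩

theorem btwn_plus_zero_of_lt (hi : i ≠ 0) (hj : j ≠ 0) (hij : i < j) :
    Btwn (PLt lt) (PU u) (PL l) (g, i) (g, j) (g, 0) := by
  obtain ⟨hi0, h0j⟩ : i < 0 ∧ 0 < j := by revert i j; decide
  exact .of_lt (plt_of_snd_lt hij) (.inl ⟨plt_of_snd_lt hi0, plt_of_snd_lt h0j⟩)

theorem eq_one_of_ne_zero_of_ne_neg_one (h0 : s ≠ 0) (h1 : s ≠ -1) : s = 1 := by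
  revert s; decide

theorem eq_neg_one_of_ne_zero_of_ne_one (h0 : s ≠ 0) (h1 : s ≠ 1) : s = -1 := by
  revert s; decide

inductive PlusAdj (lt u l : S → S → Prop) : S × SignType → S × SignType → Prop
  | ofLt {a b : S} : AdjLt lt u l a b → PlusAdj lt u l (a, 1) (b, -1)
  | ofGt {a b : S} : AdjLt lt u l a b → PlusAdj lt u l (b, -1) (a, 1)
  | ofL {a b : S} : AdjL lt l a b → PlusAdj lt u l (a, -1) (b, -1)
  | ofU {a b : S} : AdjU lt u a b → PlusAdj lt u l (a, 1) (b, 1)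

theorem PlusAdj.snd_ne_zero {x y : S × SignType} (hxy : PlusAdj lt u l x y) :
    x.2 ≠ 0 ∧ y.2 ≠ 0 := by
  cases hxy <;> simp

theorem plusAdj_of_lt (hgh : lt g h) (hi : i ≠ 0) (hj : j ≠ 0)
    (h0 : ∀ k, ¬ Btwn (PLt lt) (PU u) (PL l) (g, i) (h, j) (k, 0)) :
    PlusAdj lt u l (g, i) (h, j) := by
  obtain rfl : i = 1 := eq_one_of_ne_zero_of_ne_neg_one hi fun hi' => h0 g <|
    .of_lt (plt_of_lt hgh) (.inl ⟨plt_of_snd_lt (SignType.neg_iff.2 hi'), plt_of_lt hgh⟩)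
  obtain rfl : j = -1 := eq_neg_one_of_ne_zero_of_ne_one hj fun hj' => h0 h <|
    .of_lt (plt_of_lt hgh) (.inl ⟨plt_of_lt hgh, plt_of_snd_lt (SignType.pos_iff.2 hj')⟩)
  refine .ofLt ⟨hgh, fun k hgk hkh => h0 k ?_, fun k hgk hkh => h0 k ?_⟩
  · exact .of_lt (plt_of_lt hgh) (.inl ⟨plt_of_lt hgk, plt_of_lt hkh⟩)
  · exact .of_lt (plt_of_lt hgh) (.inr ⟨hgk, hkh⟩)

variable (hS : IsSCOrder lt u l) {x y z w : S × SignType}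
include hS

theorem IsSCOrder.btwn_plus_symm (hw : Btwn (PLt lt) (PU u) (PL l) x y w) :
    Btwn (PLt lt) (PU u) (PL l) y x w :=
  hw.symm (fun _ _ => hS.u_symm) (fun _ _ => hS.l_symm)

theorem AdjLt.not_btwn_plus (hab : AdjLt lt u l a b) :
    ¬ Btwn (PLt lt) (PU u) (PL l) (a, 1) (b, -1) w := by
  rintro (⟨-, ⟨hak, hkb⟩ | ⟨hak, hkb⟩⟩ | ⟨hba, -⟩ | ⟨hab', -⟩ | ⟨hab', -⟩)
  · exact hab.no_lt_mid w.1 (plt_one_left.1 hak) (plt_neg_one_right.1 hkb)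
  · exact hab.no_ul_mid w.1 hak hkb
  · exact hS.lt_asymm hab.rel ((plt_iff_of_ne (hS.ne_of_lt hab.rel).symm).1 hba)
  · exact hS.not_l_of_lt hab.rel hab'
  · exact hS.not_u_of_lt hab.rel hab'

theorem AdjL.not_btwn_plus (hab : AdjL lt l a b) :
    ¬ Btwn (PLt lt) (PU u) (PL l) (a, -1) (b, -1) w := by
  rintro (⟨hab', -⟩ | ⟨hba, -⟩ | ⟨-, ⟨hak, hkb⟩ | ⟨hbk, hka⟩⟩ | ⟨hab', -⟩)
  · exact hS.not_l_of_lt (plt_neg_one_right.1 hab') hab.rel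
  · exact hS.not_l_of_gt (plt_neg_one_right.1 hba) hab.rel
  · exact hab.no_mid_left w.1 hak (plt_neg_one_right.1 hkb)
  · exact hab.no_mid_right w.1 hbk (plt_neg_one_right.1 hka)
  · exact hS.not_u_of_l hab.rel hab'

theorem AdjU.not_btwn_plus (hab : AdjU lt u a b) :
    ¬ Btwn (PLt lt) (PU u) (PL l) (a, 1) (b, 1) w := by
  rintro (⟨hab', -⟩ | ⟨hba, -⟩ | ⟨hab', -⟩ | ⟨-, ⟨hak, hbk⟩ | ⟨hbk, hak⟩⟩)
  · exact hS.not_u_of_lt (plt_one_left.1 hab') hab.rel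
  · exact hS.not_u_of_gt (plt_one_left.1 hba) hab.rel
  · exact hS.not_u_of_l hab' hab.rel
  · exact hab.no_mid_left w.1 hak (plt_one_left.1 hbk)
  · exact hab.no_mid_right w.1 hbk (plt_one_left.1 hak)

theorem PlusAdj.symm (hxy : PlusAdj lt u l x y) : PlusAdj lt u l y x := by
  cases hxy with
  | ofLt hab => exact .ofGt hab
  | ofGt hab => exact .ofLt hab
  | ofL hab => exact .ofL (hab.symm hS)
  | ofU hab => exact .ofU (hab.symm hS)

theorem PlusAdj.not_btwn (hxy : PlusAdj lt u l x y) : ¬ Btwn (PLt lt) (PU u) (PL l) x y w := by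
  cases hxy with
  | ofLt hab => exact hab.not_btwn_plus hS
  | ofGt hab => exact fun hw => hab.not_btwn_plus hS (hS.btwn_plus_symm hw)
  | ofL hab => exact hab.not_btwn_plus hS
  | ofU hab => exact hab.not_btwn_plus hS

theorem PlusAdj.eq_or_trans (hxy : PlusAdj lt u l x y) (hyz : PlusAdj lt u l y z) :
    x = z ∨ PlusAdj lt u l x z := by
  rcases hxy with @⟨a, b, hab⟩ | @⟨a, b, hab⟩ | @⟨a, b, hab⟩ | @⟨a, b, hab⟩ <;>
    rcases hyz with @⟨_, c, hbc⟩ | @⟨c, _, hbc⟩ | @⟨_, c, hbc⟩ | @⟨_, c, hbc⟩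
  · rcases eq_or_ne a c with rfl | hac
    exacts [.inl rfl, .inr (.ofU (hab.adjU_of_adjLt hS hbc hac))]
  · exact .inr (.ofLt (hab.trans_adjL hS hbc))
  · rcases eq_or_ne b c with rfl | hbc'
    exacts [.inl rfl, .inr (.ofL (hab.adjL_of_adjLt hS hbc hbc'))]
  · exact .inr (.ofGt ((hbc.symm hS).trans_adjLt hS hab))
  · exact .inr (.ofGt (hbc.trans_adjL hS (hab.symm hS)))
  · rcases eq_or_ne a c with rfl | hac
    exacts [.inl rfl, .inr (.ofL (hab.trans hS hbc hac))]
  · exact .inr (.ofLt (hab.trans_adjLt hS hbc))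
  · rcases eq_or_ne a c with rfl | hac
    exacts [.inl rfl, .inr (.ofU (hab.trans hS hbc hac))]

theorem plusAdj_of_l (hgh : l g h) (hi : i ≠ 0) (hj : j ≠ 0)
    (h0 : ∀ k, ¬ Btwn (PLt lt) (PU u) (PL l) (g, i) (h, j) (k, 0)) :
    PlusAdj lt u l (g, i) (h, j) := by
  obtain rfl : i = -1 := eq_neg_one_of_ne_zero_of_ne_one hi fun hi' => h0 g <|
    .of_l hgh (.inr ⟨hS.l_symm hgh, plt_of_snd_lt (SignType.pos_iff.2 hi')⟩)
  obtain rfl : j = -1 := eq_neg_one_of_ne_zero_of_ne_one hj fun hj' => h0 h <|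
    .of_l hgh (.inl ⟨hgh, plt_of_snd_lt (SignType.pos_iff.2 hj')⟩)
  refine .ofL ⟨hgh, fun k hgk hkh => h0 k ?_, fun k hhk hkg => h0 k ?_⟩
  · exact .of_l hgh (.inl ⟨hgk, plt_of_lt hkh⟩)
  · exact .of_l hgh (.inr ⟨hhk, plt_of_lt hkg⟩)

theorem plusAdj_of_u (hgh : u g h) (hi : i ≠ 0) (hj : j ≠ 0)
    (h0 : ∀ k, ¬ Btwn (PLt lt) (PU u) (PL l) (g, i) (h, j) (k, 0)) :
    PlusAdj lt u l (g, i) (h, j) := by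
  obtain rfl : i = 1 := eq_one_of_ne_zero_of_ne_neg_one hi fun hi' => h0 g <|
    .of_u hgh (.inr ⟨hS.u_symm hgh, plt_of_snd_lt (SignType.neg_iff.2 hi')⟩)
  obtain rfl : j = 1 := eq_one_of_ne_zero_of_ne_neg_one hj fun hj' => h0 h <|
    .of_u hgh (.inl ⟨hgh, plt_of_snd_lt (SignType.neg_iff.2 hj')⟩)
  refine .ofU ⟨hgh, fun k hgk hhk => h0 k ?_, fun k hhk hgk => h0 k ?_⟩
  · exact .of_u hgh (.inl ⟨hgk, plt_of_lt hhk⟩)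
  · exact .of_u hgh (.inr ⟨hhk, plt_of_lt hgk⟩)

theorem plusAdj_of_forall_not_btwn_zero {x y : S × SignType} (hx : x.2 ≠ 0) (hy : y.2 ≠ 0)
    (hxy : x ≠ y) (h0 : ∀ k, ¬ Btwn (PLt lt) (PU u) (PL l) x y (k, 0)) :
    PlusAdj lt u l x y := by
  obtain ⟨g, i⟩ := x
  obtain ⟨h, j⟩ := y
  rcases eq_or_ne g h with rfl | hgh
  · have hij : i ≠ j := fun e => hxy (e ▸ rfl)
    rcases lt_or_gt_of_ne hij with hij | hij
    · exact (h0 g (btwn_plus_zero_of_lt hx hy hij)).elim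
    · exact (h0 g (hS.btwn_plus_symm (btwn_plus_zero_of_lt hy hx hij))).elim
  rcases hS.trichotomy_of_ne hgh with hlt | hgt | hu | hl
  · exact plusAdj_of_lt hlt hx hy h0
  · exact (plusAdj_of_lt hgt hy hx fun k hk => h0 k (hS.btwn_plus_symm hk)).symm hS
  · exact plusAdj_of_u hS hu hx hy h0
  · exact plusAdj_of_l hS hl hx hy h0

theorem eq_or_bset_plus_eq_pair_iff (x y : S × SignType) :
    (x = y ∨ (x.2 ≠ 0 ∧ y.2 ≠ 0 ∧ BSet (PLt lt) (PU u) (PL l) x y = {x, y})) ↔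
      x = y ∨ PlusAdj lt u l x y := by
  rcases eq_or_ne x y with rfl | hxy
  · simp
  simp only [hxy, false_or]
  constructor
  · rintro ⟨hx, hy, hB⟩
    refine plusAdj_of_forall_not_btwn_zero hS hx hy hxy fun k hk => ?_
    rcases eq_or_eq_of_btwn hB hxy hk with rfl | rfl
    exacts [hx rfl, hy rfl]
  · intro hadj
    exact ⟨hadj.snd_ne_zero.1, hadj.snd_ne_zero.2,
      bset_eq_pair_of_forall_not_btwn fun _ => hadj.not_btwn hS⟩

theorem equivalence_eq_or_plusAdj : Equivalence fun x y => x = y ∨ PlusAdj lt u l x y where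
  refl _ := .inl rfl
  symm := by
    rintro x y (rfl | hxy)
    exacts [.inl rfl, .inr (hxy.symm hS)]
  trans := by
    rintro x y z (rfl | hxy) (rfl | hyz)
    exacts [.inl rfl, .inr hyz, .inr hxy, hxy.eq_or_trans hS hyz]

end Plus

theorem stmt19_general {G : Type*} (lt u l : G → G → Prop)
    (hirr : ∀ x : G, ¬ lt x x)
    (htrans : ∀ x y z : G, lt x y → lt y z → lt x z)
    (hsce : IsSCExt lt u l) :
    Equivalence (fun x y : G × SignType =>
      x = y ∨ (x.2 ≠ 0 ∧ y.2 ≠ 0 ∧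
        BSet (PLt lt) (PU u) (PL l) x y = {x, y})) := by
  have hS : IsSCOrder lt u l := ⟨hirr, htrans, hsce⟩
  simpa only [eq_or_bset_plus_eq_pair_iff hS] using equivalence_eq_or_plusAdj hS

/-- The relation `R` on `G⁺` given by `x R y` iff `x = y`, or
`x, y ∈ G × {-1, 1}` and `B_{x,y} = {x, y}`, is an equivalence relation. -/
theorem stmt19 {G : Type*} [Group G] (lt u l : G → G → Prop)
    (hirr : ∀ x : G, ¬ lt x x)
    (htrans : ∀ x y z : G, lt x y → lt y z → lt x z)
    (hltinv : LeftInvariant lt) (huinv : LeftInvariant u) (hlinv : LeftInvariant l)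
    (hsce : IsSCExt lt u l)
    (hrect : Rectifiable lt u l) :
    Equivalence (fun x y : G × SignType =>
      x = y ∨ (x.2 ≠ 0 ∧ y.2 ≠ 0 ∧
        BSet (PLt lt) (PU u) (PL l) x y = {x, y})) :=
  stmt19_general lt u l hirr htrans hsce

end PaperSC
end
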